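/- arXiv:2212.14327 — 5 statements merged into one kernel-verified Lean document; each statement's English description precedes it below -/
import Mathlib

section
/- Let α ∈ [1/2, 1], α̂ = 1 − α, β > 0, γ > 0, η > 0. The equation (1+η) = (1 + γa)·[α·e^{β(a + (γ/2)a²)} + α̂·e^{−β(a + (γ/2)a²)}] has a unique solution a₀ in (0, ∞). -/
open Real

theorem stmt_2 (α β γ η : ℝ) (hα : α ∈ Set.Icc (1/2 : ℝ) 1) (hβ : 0 < β) (hγ : 0 < γ)
    (hη : 0 < η) :
    ∃! a₀ : ℝ, 0 < a₀ ∧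
      (1 + η) = (1 + γ * a₀) *
        (α * Real.exp (β * (a₀ + (γ / 2) * a₀ ^ 2))
          + (1 - α) * Real.exp (-(β * (a₀ + (γ / 2) * a₀ ^ 2)))) := by
  obtain ⟨hα1, hα2⟩ := hα
  set g : ℝ → ℝ := fun a => β * (a + (γ / 2) * a ^ 2) with hg
  set f : ℝ → ℝ := fun a => (1 + γ * a) *
    (α * Real.exp (g a) + (1 - α) * Real.exp (-(g a))) with hfdef
  have hα0 : (0:ℝ) ≤ α := by linarith
  have hα' : (0:ℝ) ≤ 1 - α := by linarith
  -- g is nonneg and monotone on [0,∞)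
  have hg0 : ∀ a : ℝ, 0 ≤ a → 0 ≤ g a := by
    intro a ha; simp only [hg]; positivity
  have hgm : ∀ a b : ℝ, 0 ≤ a → a ≤ b → g a ≤ g b := by
    intro a b ha hab
    have hsq : a ^ 2 ≤ b ^ 2 := by nlinarith
    have h5 : a + γ / 2 * a ^ 2 ≤ b + γ / 2 * b ^ 2 := by nlinarith
    simp only [hg]
    exact mul_le_mul_of_nonneg_left h5 hβ.le
  -- H x = α e^x + (1-α) e^{-x} is monotone for 0 ≤ x ≤ y
  have hH : ∀ x y : ℝ, 0 ≤ x → x ≤ y →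
      α * Real.exp x + (1 - α) * Real.exp (-x)
        ≤ α * Real.exp y + (1 - α) * Real.exp (-y) := by
    intro x y hx hxy
    have h1 : Real.exp x ≤ Real.exp y := Real.exp_le_exp.2 hxy
    have e1 : Real.exp (-x) = Real.exp (-(x + y)) * Real.exp y := by
      rw [← Real.exp_add]; ring_nf
    have e2 : Real.exp (-y) = Real.exp (-(x + y)) * Real.exp x := by
      rw [← Real.exp_add]; ring_nf
    have h3 : Real.exp (-(x + y)) ≤ 1 := Real.exp_le_one_iff.2 (by linarith)
    have h4 : 0 < Real.exp (-(x + y)) := Real.exp_pos _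
    nlinarith [mul_le_mul_of_nonneg_right h3 (sub_nonneg.2 h1)]
  -- lower bound on second factor
  have hHlb : ∀ a : ℝ, 0 ≤ a →
      (1:ℝ)/2 ≤ α * Real.exp (g a) + (1 - α) * Real.exp (-(g a)) := by
    intro a ha
    have h1 : (1:ℝ) ≤ Real.exp (g a) := Real.one_le_exp (hg0 a ha)
    have h2 : (0:ℝ) < Real.exp (-(g a)) := Real.exp_pos _
    nlinarith
  -- strict monotonicity of f on [0,∞)
  have hmono : ∀ a b : ℝ, 0 ≤ a → a < b → f a < f b := by
    intro a b ha hab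
    have h1 : α * Real.exp (g a) + (1 - α) * Real.exp (-(g a))
        ≤ α * Real.exp (g b) + (1 - α) * Real.exp (-(g b)) :=
      hH (g a) (g b) (hg0 a ha) (hgm a b ha hab.le)
    have h2 := hHlb b (le_trans ha hab.le)
    have h3 : 1 + γ * a < 1 + γ * b := by nlinarith
    have h4 : (0:ℝ) < 1 + γ * a := by nlinarith
    simp only [hfdef]
    nlinarith
  have hf0 : f 0 = 1 := by
    simp only [hfdef, hg]
    norm_num
  -- f is continuous
  have hcont : Continuous f := by
    simp only [hfdef, hg]; fun_prop
  -- bound at M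
  set M : ℝ := 2 * (1 + η) / γ with hM
  have hMpos : 0 < M := by positivity
  have hfM : 1 + η ≤ f M := by
    have h1 := hHlb M hMpos.le
    have h2 : 1 + γ * M = 1 + 2 * (1 + η) := by
      rw [hM, mul_div_assoc', mul_div_right_comm, div_self hγ.ne', one_mul]
    have h3 : (0:ℝ) < 1 + γ * M := by rw [h2]; linarith
    calc 1 + η ≤ (1 + γ * M) * (1/2) := by rw [h2]; linarith
    _ ≤ f M := by
        simp only [hfdef]
        nlinarith
  -- IVT
  obtain ⟨a₀, ha₀mem, ha₀⟩ := intermediate_value_Icc hMpos.le (hcont.continuousOn)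
    (by rw [hf0]; exact ⟨by linarith, hfM⟩ : (1 + η) ∈ Set.Icc (f 0) (f M))
  have ha₀pos : 0 < a₀ := by
    rcases lt_or_eq_of_le ha₀mem.1 with h | h
    · exact h
    · exfalso; rw [← h] at ha₀; rw [hf0] at ha₀; linarith
  refine ⟨a₀, ⟨ha₀pos, ha₀.symm⟩, ?_⟩
  rintro b ⟨hbpos, hbeq⟩
  have hfb : f b = 1 + η := hbeq.symm
  by_contra hne
  rcases lt_or_gt_of_ne hne with h | h
  · have := hmono b a₀ hbpos.le h; rw [hfb, ha₀] at this; linarith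
  · have := hmono a₀ b ha₀pos.le h; rw [hfb, ha₀] at this; linarith
end

section
/- Let α ∈ [1/2, 1], α̂ = 1 − α, β > 0, γ > 0. For η > 0, let a₀(η) denote the unique positive solution of (1+η) = (1 + γa)·[α·e^{β(a + (γ/2)a²)} + α̂·e^{−β(a + (γ/2)a²)}]. Then the map η ↦ a₀(η) is continuously differentiable and strictly increasing on (0, ∞), with ∂a₀/∂η = 1 / { γ[α e^{β(a₀+γa₀²/2)} + α̂ e^{−β(a₀+γa₀²/2)}] + β(1+γa₀)²[α e^{β(a₀+γa₀²/2)} − α̂ e^{−β(a₀+γa₀²/2)}] } > 0. -/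
open Real Set

theorem stmt_6 (α β γ : ℝ) (hα : α ∈ Set.Icc (1/2 : ℝ) 1) (hβ : 0 < β) (hγ : 0 < γ)
    (a₀ : ℝ → ℝ)
    (ha₀ : ∀ η : ℝ, 0 < η → 0 < a₀ η ∧
      (1 + η) = (1 + γ * a₀ η) *
        (α * Real.exp (β * (a₀ η + (γ / 2) * (a₀ η) ^ 2))
          + (1 - α) * Real.exp (-(β * (a₀ η + (γ / 2) * (a₀ η) ^ 2))))) :
    ContDiffOn ℝ 1 a₀ (Set.Ioi (0:ℝ)) ∧
    StrictMonoOn a₀ (Set.Ioi (0:ℝ)) ∧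
    ∀ η ∈ Set.Ioi (0:ℝ),
      0 < 1 / (γ * (α * Real.exp (β * (a₀ η + (γ / 2) * (a₀ η) ^ 2))
              + (1 - α) * Real.exp (-(β * (a₀ η + (γ / 2) * (a₀ η) ^ 2))))
            + β * (1 + γ * a₀ η) ^ 2 *
              (α * Real.exp (β * (a₀ η + (γ / 2) * (a₀ η) ^ 2))
              - (1 - α) * Real.exp (-(β * (a₀ η + (γ / 2) * (a₀ η) ^ 2))))) ∧
      HasDerivAt a₀
        (1 / (γ * (α * Real.exp (β * (a₀ η + (γ / 2) * (a₀ η) ^ 2))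
              + (1 - α) * Real.exp (-(β * (a₀ η + (γ / 2) * (a₀ η) ^ 2))))
            + β * (1 + γ * a₀ η) ^ 2 *
              (α * Real.exp (β * (a₀ η + (γ / 2) * (a₀ η) ^ 2))
              - (1 - α) * Real.exp (-(β * (a₀ η + (γ / 2) * (a₀ η) ^ 2)))))) η := by
  obtain ⟨hα1, hα2⟩ := hα
  set E : ℝ → ℝ := fun a => Real.exp (β * (a + (γ/2) * a^2)) with hE
  set Eb : ℝ → ℝ := fun a => Real.exp (-(β * (a + (γ/2) * a^2))) with hEb
  set G : ℝ → ℝ := fun a => (1 + γ * a) * (α * E a + (1 - α) * Eb a) - 1 with hGdef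
  set D : ℝ → ℝ := fun a => γ * (α * E a + (1 - α) * Eb a)
      + β * (1 + γ * a)^2 * (α * E a - (1 - α) * Eb a) with hDdef
  have hEpos : ∀ a, 0 < E a := fun a => Real.exp_pos _
  have hEbpos : ∀ a, 0 < Eb a := fun a => Real.exp_pos _
  have hEEb : ∀ a, E a * Eb a = 1 := by
    intro a; rw [hE, hEb]; simp [← Real.exp_add]
  have hfpos : ∀ a : ℝ, 0 < a → 0 < β * (a + (γ/2) * a^2) := by
    intro a ha; positivity
  have hE1 : ∀ a : ℝ, 0 < a → 1 < E a := by
    intro a ha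
    rw [hE]; exact Real.one_lt_exp_iff.mpr (hfpos a ha)
  have hEb1 : ∀ a : ℝ, 0 < a → Eb a < 1 := by
    intro a ha
    rw [hEb]; exact Real.exp_lt_one_iff.mpr (by linarith [hfpos a ha])
  -- positivity of D on positive a
  have hDpos : ∀ a : ℝ, 0 < a → 0 < D a := by
    intro a ha
    have h1 := hEpos a; have h2 := hEbpos a; have h3 := hE1 a ha; have h4 := hEb1 a ha
    have hsum : 0 < α * E a + (1 - α) * Eb a := by nlinarith
    have hdiff : 0 < α * E a - (1 - α) * Eb a := by nlinarith
    have : 0 < (1 + γ * a)^2 := by positivity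
    rw [hDdef]; positivity
  -- derivative of G
  have hGderiv : ∀ a : ℝ, HasDerivAt G (D a) a := by
    intro a
    have hin : HasDerivAt (fun a : ℝ => β * (a + (γ/2) * a^2)) (β * (1 + γ * a)) a := by
      have h1 : HasDerivAt (fun a : ℝ => a + (γ/2) * a^2) (1 + γ * a) a := by
        have := ((hasDerivAt_id a).add (((hasDerivAt_pow 2 a).const_mul (γ/2))))
        convert this using 1 <;> first | rfl | ring
      have := h1.const_mul β
      convert this using 1 <;> ring
    have hEd : HasDerivAt E (β * (1 + γ * a) * E a) a := by
      have := hin.exp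
      rw [hE]; convert this using 1 <;> ring
    have hEbd : HasDerivAt Eb (-(β * (1 + γ * a)) * Eb a) a := by
      have := (hin.neg).exp
      rw [hEb]; convert this using 1 <;> simp only [Pi.neg_apply] <;> ring
    have hsum : HasDerivAt (fun a => α * E a + (1 - α) * Eb a)
        (α * (β * (1 + γ * a) * E a) + (1 - α) * (-(β * (1 + γ * a)) * Eb a)) a :=
      (hEd.const_mul α).add (hEbd.const_mul (1 - α))
    have hlin : HasDerivAt (fun a : ℝ => 1 + γ * a) γ a := by
      simpa using ((hasDerivAt_id a).const_mul γ).const_add 1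
    have := (hlin.mul hsum).sub_const 1
    rw [hGdef]; convert this using 1
    all_goals first | rfl | (rw [hDdef]; ring)
  -- strict monotonicity of G on Ioi 0
  have hGcont : ContinuousOn G (Ici 0) := fun x _ => ((hGderiv x).continuousAt).continuousWithinAt
  have hGmono : StrictMonoOn G (Ici (0:ℝ)) := by
    apply strictMonoOn_of_deriv_pos (convex_Ici 0) hGcont
    intro x hx
    rw [interior_Ici] at hx
    rw [(hGderiv x).deriv]
    exact hDpos x hx
  -- G (a₀ η) = η
  have hGval : ∀ η : ℝ, 0 < η → G (a₀ η) = η := by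
    intro η hη
    obtain ⟨_, h2⟩ := ha₀ η hη
    rw [hGdef]; simp only [hE, hEb]; linarith [h2]
  -- G c > 0 for c > 0
  have hGpos : ∀ c : ℝ, 0 < c → 0 < G c := by
    intro c hc
    have h1 := hEpos c; have h2 := hEbpos c; have h3 := hE1 c hc; have h4 := hEb1 c hc
    have hprod := hEEb c
    have hsum1 : 1 ≤ α * E c + (1 - α) * Eb c := by nlinarith
    rw [hGdef]
    have : 1 < (1 + γ * c) * (α * E c + (1 - α) * Eb c) := by nlinarith [mul_pos hγ hc]
    simp only; linarith
  -- a₀ is "onto": for c > 0, a₀ (G c) = c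
  have hsurj : ∀ c : ℝ, 0 < c → a₀ (G c) = c := by
    intro c hc
    have hGc := hGpos c hc
    have h1 := (ha₀ (G c) hGc).1
    have h2 := hGval (G c) hGc
    exact hGmono.injOn (le_of_lt h1) (le_of_lt hc) h2
  -- strict monotonicity of a₀
  have ha₀mono : StrictMonoOn a₀ (Set.Ioi (0:ℝ)) := by
    intro x hx y hy hxy
    rw [mem_Ioi] at hx hy
    by_contra h
    push_neg at h
    have := hGmono.monotoneOn (le_of_lt (ha₀ y hy).1) (le_of_lt (ha₀ x hx).1) h
    rw [hGval x hx, hGval y hy] at this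
    linarith
  -- continuity of a₀ at every η > 0
  have ha₀cont : ∀ η : ℝ, 0 < η → ContinuousAt a₀ η := by
    intro η hη
    apply ha₀mono.continuousAt_of_image_mem_nhds (Ioi_mem_nhds hη)
    have hsub : Ioi (0:ℝ) ⊆ a₀ '' Ioi 0 := by
      intro c hc
      rw [mem_Ioi] at hc
      exact ⟨G c, hGpos c hc, hsurj c hc⟩
    exact Filter.mem_of_superset (Ioi_mem_nhds (ha₀ η hη).1) hsub
  -- derivative of a₀
  have ha₀deriv : ∀ η : ℝ, 0 < η → HasDerivAt a₀ (1 / D (a₀ η)) η := by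
    intro η hη
    have hne : D (a₀ η) ≠ 0 := ne_of_gt (hDpos _ (ha₀ η hη).1)
    have hev : ∀ᶠ y in nhds η, G (a₀ y) = y := by
      filter_upwards [Ioi_mem_nhds hη] with y hy
      exact hGval y hy
    have := HasDerivAt.of_local_left_inverse (ha₀cont η hη) (hGderiv (a₀ η)) hne hev
    simpa [one_div] using this
  -- ContDiffOn
  have hcd : ContDiffOn ℝ 1 a₀ (Set.Ioi (0:ℝ)) := by
    have h01 : (1 : WithTop ℕ∞) = 0 + 1 := by norm_num
    rw [h01, contDiffOn_succ_iff_deriv_of_isOpen isOpen_Ioi]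
    refine ⟨fun x hx => ((ha₀deriv x hx).differentiableAt).differentiableWithinAt,
      by simp, ?_⟩
    rw [contDiffOn_zero]
    have heq : ∀ x ∈ Ioi (0:ℝ), deriv a₀ x = 1 / D (a₀ x) := fun x hx => (ha₀deriv x hx).deriv
    apply ContinuousOn.congr (f := fun x => 1 / D (a₀ x)) _ heq
    apply ContinuousOn.div continuousOn_const
    · have hDcont : Continuous D := by
        rw [hDdef, hE, hEb]; fun_prop
      intro x hx
      exact (hDcont.continuousAt.comp (ha₀cont x hx)).continuousWithinAt
    · intro x hx
      exact ne_of_gt (hDpos _ (ha₀ x hx).1)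
  refine ⟨hcd, ha₀mono, ?_⟩
  intro η hη
  rw [mem_Ioi] at hη
  have h1 := hDpos (a₀ η) (ha₀ η hη).1
  have h2 := ha₀deriv η hη
  rw [hDdef] at h1 h2
  simp only [hE, hEb] at h1 h2
  exact ⟨by positivity, h2⟩
end

section
/- Let β > 0, γ > 0, η > 0 be fixed. For α ∈ [1/2, 1], let a₀(α) denote the unique positive solution of (1+η) = (1 + γa)·[α·e^{β(a + (γ/2)a²)} + (1−α)·e^{−β(a + (γ/2)a²)}]. Then α ↦ a₀(α) is strictly decreasing on [1/2, 1]. -/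
open Real Set

theorem stmt_7 (β γ η : ℝ) (hβ : 0 < β) (hγ : 0 < γ) (hη : 0 < η)
    (a₀ : ℝ → ℝ)
    (ha₀ : ∀ α ∈ Set.Icc (1/2 : ℝ) 1, 0 < a₀ α ∧
      (1 + η) = (1 + γ * a₀ α) *
        (α * Real.exp (β * (a₀ α + (γ / 2) * (a₀ α) ^ 2))
          + (1 - α) * Real.exp (-(β * (a₀ α + (γ / 2) * (a₀ α) ^ 2))))) :
    StrictAntiOn a₀ (Set.Icc (1/2 : ℝ) 1) := by
  intro α₁ h₁ α₂ h₂ hαlt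
  obtain ⟨hp₁, he₁⟩ := ha₀ α₁ h₁
  obtain ⟨hp₂, he₂⟩ := ha₀ α₂ h₂
  by_contra hcon
  push_neg at hcon
  set a := a₀ α₁ with ha
  set b := a₀ α₂ with hb
  have hab : a ≤ b := hcon
  set x := β * (a + (γ / 2) * a ^ 2) with hx
  set y := β * (b + (γ / 2) * b ^ 2) with hy
  have hx0 : 0 < x := by
    have h1 : 0 < a + (γ / 2) * a ^ 2 := by nlinarith [mul_pos hγ (mul_pos hp₁ hp₁)]
    exact mul_pos hβ h1
  have hxy : x ≤ y := by
    have h1 : a + (γ / 2) * a ^ 2 ≤ b + (γ / 2) * b ^ 2 := by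
      nlinarith [mul_nonneg (sub_nonneg.2 hab) (add_pos hp₁ hp₂).le]
    exact mul_le_mul_of_nonneg_left h1 hβ.le
  set u := Real.exp x with hu
  set v := Real.exp y with hv
  set p := Real.exp (-x) with hp
  set q := Real.exp (-y) with hq
  have hu1 : 1 < u := by
    rw [hu, show (1:ℝ) = Real.exp 0 from Real.exp_zero.symm]
    exact Real.exp_lt_exp.mpr hx0
  have huv : u ≤ v := Real.exp_le_exp.mpr hxy
  have hpq : q ≤ p := Real.exp_le_exp.mpr (neg_le_neg hxy)
  have hp0 : 0 < p := Real.exp_pos _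
  have hq0 : 0 < q := Real.exp_pos _
  have hup : u * p = 1 := by rw [hu, hp, ← Real.exp_add]; simp
  have hvq : v * q = 1 := by rw [hv, hq, ← Real.exp_add]; simp
  clear_value a b x y u v p q
  clear ha₀
  have hplt1 : p < 1 := by nlinarith
  obtain ⟨hα₁l, hα₁r⟩ := h₁
  obtain ⟨hα₂l, hα₂r⟩ := h₂
  have hB1 : α₁ * u + (1 - α₁) * p < α₂ * u + (1 - α₂) * p := by
    nlinarith [mul_pos (sub_pos.2 hαlt) (show (0:ℝ) < u - p by linarith)]
  have hpqeq : p - q = p * q * (v - u) := by linear_combination q * hup - p * hvq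
  have hq1 : q < 1 := lt_of_le_of_lt hpq hplt1
  have hpq1 : p * q ≤ 1 := mul_le_one₀ hplt1.le hq0.le hq1.le
  have h4 : (1 - α₂) * (p * q) ≤ α₂ := by
    have := mul_le_mul_of_nonneg_left hpq1 (show (0:ℝ) ≤ 1 - α₂ by linarith)
    linarith
  have h5 : 0 ≤ (v - u) * (α₂ - (1 - α₂) * (p * q)) :=
    mul_nonneg (by linarith) (by linarith)
  have h6 : (1 - α₂) * (p - q) = (1 - α₂) * (p * q * (v - u)) := by rw [hpqeq]
  have hB2 : α₂ * u + (1 - α₂) * p ≤ α₂ * v + (1 - α₂) * q := by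
    linarith [h5, h6]
  have hB0 : 0 < α₂ * u + (1 - α₂) * p :=
    add_pos_of_pos_of_nonneg (mul_pos (by linarith) (by linarith))
      (mul_nonneg (by linarith) hp0.le)
  have hc1 : (0:ℝ) < 1 + γ * a := by linarith [mul_pos hγ hp₁]
  have hc : 1 + γ * a ≤ 1 + γ * b := by linarith [mul_le_mul_of_nonneg_left hab hγ.le]
  have h1 : (1 + γ * a) * (α₁ * u + (1 - α₁) * p) <
      (1 + γ * a) * (α₂ * u + (1 - α₂) * p) := by
    exact mul_lt_mul_of_pos_left hB1 hc1
  have h2 : (1 + γ * a) * (α₂ * u + (1 - α₂) * p) ≤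
      (1 + γ * b) * (α₂ * u + (1 - α₂) * p) :=
    mul_le_mul_of_nonneg_right hc hB0.le
  have h3 : (1 + γ * b) * (α₂ * u + (1 - α₂) * p) ≤
      (1 + γ * b) * (α₂ * v + (1 - α₂) * q) :=
    mul_le_mul_of_nonneg_left hB2 (by linarith)
  linarith [he₁, he₂]
end

section
/- Let α ∈ [1/2, 1], γ > 0, η > 0 be fixed. For β > 0, let a₀(β) denote the unique positive solution of (1+η) = (1 + γa)·[α·e^{β(a + (γ/2)a²)} + (1−α)·e^{−β(a + (γ/2)a²)}]. Then β ↦ a₀(β) is strictly decreasing on (0, ∞). -/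
open Real Set

private lemma g_strict (α : ℝ) (h1 : 1/2 ≤ α) {u v : ℝ} (h0 : 0 < u) (huv : u < v) :
    α * Real.exp u + (1 - α) * Real.exp (-u) < α * Real.exp v + (1 - α) * Real.exp (-v) := by
  have e1 : Real.exp (u + v) * Real.exp (-u) = Real.exp v := by
    rw [← Real.exp_add]; congr 1; ring
  have e2 : Real.exp (u + v) * Real.exp (-v) = Real.exp u := by
    rw [← Real.exp_add]; congr 1; ring
  have hd : 0 < Real.exp (-u) - Real.exp (-v) := by
    have := Real.exp_lt_exp.mpr (neg_lt_neg huv); linarith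
  have hE : 1 < Real.exp (u + v) := by
    have h : Real.exp 0 < Real.exp (u + v) := Real.exp_lt_exp.mpr (by linarith)
    simpa using h
  have hαpos : (0:ℝ) < α := by linarith
  have key : (1 - α) * (Real.exp (-u) - Real.exp (-v)) < α * (Real.exp v - Real.exp u) := by
    have step1 : (1 - α) * (Real.exp (-u) - Real.exp (-v)) ≤ α * (Real.exp (-u) - Real.exp (-v)) :=
      mul_le_mul_of_nonneg_right (by linarith) hd.le
    have step2 : α * (Real.exp (-u) - Real.exp (-v))
        < (α * Real.exp (u + v)) * (Real.exp (-u) - Real.exp (-v)) := by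
      apply mul_lt_mul_of_pos_right _ hd
      nlinarith
    have step3 : (α * Real.exp (u + v)) * (Real.exp (-u) - Real.exp (-v))
        = α * (Real.exp v - Real.exp u) := by
      linear_combination α * e1 - α * e2
    linarith
  linarith

private lemma g_mono (α : ℝ) (h1 : 1/2 ≤ α) {u v : ℝ} (h0 : 0 ≤ u) (huv : u ≤ v) :
    α * Real.exp u + (1 - α) * Real.exp (-u) ≤ α * Real.exp v + (1 - α) * Real.exp (-v) := by
  have e1 : Real.exp (u + v) * Real.exp (-u) = Real.exp v := by
    rw [← Real.exp_add]; congr 1; ring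
  have e2 : Real.exp (u + v) * Real.exp (-v) = Real.exp u := by
    rw [← Real.exp_add]; congr 1; ring
  have hd : 0 ≤ Real.exp (-u) - Real.exp (-v) := by
    have := Real.exp_le_exp.mpr (neg_le_neg huv); linarith
  have hE : 1 ≤ Real.exp (u + v) := by
    have h : Real.exp 0 ≤ Real.exp (u + v) := Real.exp_le_exp.mpr (by linarith)
    simpa using h
  have hαpos : (0:ℝ) < α := by linarith
  have key : (1 - α) * (Real.exp (-u) - Real.exp (-v)) ≤ α * (Real.exp v - Real.exp u) := by
    have step1 : (1 - α) * (Real.exp (-u) - Real.exp (-v)) ≤ α * (Real.exp (-u) - Real.exp (-v)) :=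
      mul_le_mul_of_nonneg_right (by linarith) hd
    have step2 : α * (Real.exp (-u) - Real.exp (-v))
        ≤ (α * Real.exp (u + v)) * (Real.exp (-u) - Real.exp (-v)) := by
      apply mul_le_mul_of_nonneg_right _ hd
      nlinarith
    have step3 : (α * Real.exp (u + v)) * (Real.exp (-u) - Real.exp (-v))
        = α * (Real.exp v - Real.exp u) := by
      linear_combination α * e1 - α * e2
    linarith
  linarith

theorem stmt_8 (α γ η : ℝ) (hα : α ∈ Set.Icc (1/2 : ℝ) 1) (hγ : 0 < γ) (hη : 0 < η)
    (a₀ : ℝ → ℝ)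
    (ha₀ : ∀ β : ℝ, 0 < β → 0 < a₀ β ∧
      (1 + η) = (1 + γ * a₀ β) *
        (α * Real.exp (β * (a₀ β + (γ / 2) * (a₀ β) ^ 2))
          + (1 - α) * Real.exp (-(β * (a₀ β + (γ / 2) * (a₀ β) ^ 2))))) :
    StrictAntiOn a₀ (Set.Ioi (0:ℝ)) := by
  obtain ⟨hα1, hα2⟩ := hα
  intro β₁ hβ₁ β₂ hβ₂ h12
  simp only [Set.mem_Ioi] at hβ₁ hβ₂
  by_contra hcon
  push_neg at hcon  -- a₀ β₁ ≤ a₀ β₂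
  obtain ⟨ha1, he1⟩ := ha₀ β₁ hβ₁
  obtain ⟨ha2, he2⟩ := ha₀ β₂ hβ₂
  set a1 := a₀ β₁ with ha1def
  set a2 := a₀ β₂ with ha2def
  set t1 := a1 + (γ / 2) * a1 ^ 2 with ht1
  set t2 := a2 + (γ / 2) * a2 ^ 2 with ht2
  have hga1 : 0 ≤ γ / 2 * a1 ^ 2 := by positivity
  have ht1pos : 0 < t1 := by rw [ht1]; linarith
  have hsq : a1 ^ 2 ≤ a2 ^ 2 := by nlinarith
  have ht12 : t1 ≤ t2 := by
    rw [ht1, ht2]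
    have : γ / 2 * a1 ^ 2 ≤ γ / 2 * a2 ^ 2 :=
      mul_le_mul_of_nonneg_left hsq (by linarith)
    linarith
  have hu1 : (0:ℝ) < β₁ * t1 := mul_pos hβ₁ ht1pos
  have huv : β₁ * t1 < β₂ * t1 := mul_lt_mul_of_pos_right h12 ht1pos
  have huv2 : β₂ * t1 ≤ β₂ * t2 := mul_le_mul_of_nonneg_left ht12 hβ₂.le
  have hstep1 := g_strict α hα1 hu1 huv
  have hstep2 := g_mono α hα1 (le_of_lt (lt_trans hu1 huv)) huv2
  have hGpos : 0 < α * Real.exp (β₂ * t1) + (1 - α) * Real.exp (-(β₂ * t1)) := by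
    have h1 : 0 < α * Real.exp (β₂ * t1) := by positivity
    have h2 : 0 ≤ (1 - α) * Real.exp (-(β₂ * t1)) :=
      mul_nonneg (by linarith) (Real.exp_pos _).le
    linarith
  have hfac : (0:ℝ) < 1 + γ * a1 := by
    have : 0 < γ * a1 := mul_pos hγ ha1
    linarith
  have hfac2 : 1 + γ * a1 ≤ 1 + γ * a2 := by
    have : γ * a1 ≤ γ * a2 := mul_le_mul_of_nonneg_left hcon hγ.le
    linarith
  have h1 : (1 + γ * a1) * (α * Real.exp (β₁ * t1) + (1 - α) * Real.exp (-(β₁ * t1)))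
      < (1 + γ * a1) * (α * Real.exp (β₂ * t1) + (1 - α) * Real.exp (-(β₂ * t1))) :=
    (mul_lt_mul_iff_right₀ hfac).mpr hstep1
  have h2 : (1 + γ * a1) * (α * Real.exp (β₂ * t1) + (1 - α) * Real.exp (-(β₂ * t1)))
      ≤ (1 + γ * a2) * (α * Real.exp (β₂ * t2) + (1 - α) * Real.exp (-(β₂ * t2))) :=
    mul_le_mul hfac2 hstep2 hGpos.le (by linarith)
  linarith [he1, he2, h1, h2]
end

section
/- Let α ∈ [1/2, 1], α̂ = 1 − α, β > 0, γ > 0, η > 0, r ≥ 0, 0 ≤ t ≤ T, and let a₀ be the unique positive solution of (1+η) = (1+γa₀)[α e^{β(a₀+γa₀²/2)} + α̂ e^{−β(a₀+γa₀²/2)}]. Define f(x) = (1+η)x − (1/β)[α e^{β(x+γx²/2)} − α̂ e^{−β(x+γx²/2)}] for x ≥ 0. Then for every z ≥ 0, the maximizer of a ↦ f(a·e^{r(T−t)}) over a ∈ [0, z] is a*(z) = min(a₀ e^{−r(T−t)}, z); i.e., the per-loss optimal retention is of excess-of-loss type. -/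
open Real Set

theorem stmt_18 (α β γ η r t T a₀ : ℝ) (hα : α ∈ Set.Icc (1/2 : ℝ) 1) (hβ : 0 < β)
    (hγ : 0 < γ) (hη : 0 < η) (hr : 0 ≤ r) (ht : 0 ≤ t) (htT : t ≤ T)
    (ha₀ : 0 < a₀)
    (heq : (1 + η) = (1 + γ * a₀) *
      (α * Real.exp (β * (a₀ + (γ / 2) * a₀ ^ 2))
        + (1 - α) * Real.exp (-(β * (a₀ + (γ / 2) * a₀ ^ 2)))))
    (f : ℝ → ℝ)
    (hf : ∀ x, f x = (1 + η) * x -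
      (1 / β) * (α * Real.exp (β * (x + (γ / 2) * x ^ 2))
        - (1 - α) * Real.exp (-(β * (x + (γ / 2) * x ^ 2))))) :
    ∀ z : ℝ, 0 ≤ z →
      IsMaxOn (fun a => f (a * Real.exp (r * (T - t)))) (Set.Icc 0 z)
        (min (a₀ * Real.exp (-(r * (T - t)))) z) ∧
      ∀ b ∈ Set.Icc (0:ℝ) z,
        IsMaxOn (fun a => f (a * Real.exp (r * (T - t)))) (Set.Icc 0 z) b →
        b = min (a₀ * Real.exp (-(r * (T - t)))) z := by
  obtain ⟨hα1, hα2⟩ := hα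
  have hα0 : (0:ℝ) < α := by linarith
  have hα' : (0:ℝ) ≤ 1 - α := by linarith
  have hαα : 1 - α ≤ α := by linarith
  have hβ' : β ≠ 0 := ne_of_gt hβ
  set S : ℝ → ℝ := fun x => α * Real.exp (β * (x + (γ/2) * x^2))
      + (1-α) * Real.exp (-(β * (x + (γ/2) * x^2))) with hSdef
  set H : ℝ → ℝ := fun x => (1 + γ*x) * S x with hHdef
  have hfe : f = fun x => (1+η)*x - (1/β)*(α * Real.exp (β * (x + (γ/2) * x^2))
      - (1-α)*Real.exp (-(β * (x + (γ/2) * x^2)))) := funext hf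
  subst hfe
  -- positivity of S
  have hSpos : ∀ x, 0 < S x := by
    intro x
    have h1 : 0 < α * Real.exp (β * (x + (γ/2) * x^2)) := by positivity
    have h2 : 0 ≤ (1-α) * Real.exp (-(β * (x + (γ/2) * x^2))) := by positivity
    simp only [hSdef]; linarith
  -- monotonicity of S on [0,∞)
  have hSmono : ∀ x y : ℝ, 0 ≤ x → x ≤ y → S x ≤ S y := by
    intro x y hx hxy
    have hφx : (0:ℝ) ≤ x + (γ/2)*x^2 := by nlinarith
    have hφxy : x + (γ/2)*x^2 ≤ y + (γ/2)*y^2 := by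
      nlinarith [mul_nonneg (sub_nonneg.2 hxy) (add_nonneg hx (hx.trans hxy))]
    set u := β * (x + (γ/2)*x^2) with hu'
    set v := β * (y + (γ/2)*y^2) with hv'
    have hu : 0 ≤ u := by positivity
    have huv : u ≤ v := by
      apply mul_le_mul_of_nonneg_left hφxy hβ.le
    have hA : 1 ≤ Real.exp u := Real.one_le_exp hu
    have hAB : Real.exp u ≤ Real.exp v := Real.exp_le_exp.2 huv
    have hApos : 0 < Real.exp u := Real.exp_pos u
    have hBpos : 0 < Real.exp v := Real.exp_pos v
    have h1 : (Real.exp u)⁻¹ - (Real.exp v)⁻¹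
        = (Real.exp v - Real.exp u) * ((Real.exp u)⁻¹ * (Real.exp v)⁻¹) := by
      field_simp
    have h2 : (Real.exp u)⁻¹ * (Real.exp v)⁻¹ ≤ 1 := by
      have : 1 ≤ Real.exp u * Real.exp v := by nlinarith
      rw [← mul_inv]
      exact inv_le_one_of_one_le₀ this
    have h3 : 0 ≤ Real.exp v - Real.exp u := by linarith
    have key : (1-α)*((Real.exp u)⁻¹ - (Real.exp v)⁻¹) ≤ α*(Real.exp v - Real.exp u) := by
      rw [h1]
      calc (1-α)*((Real.exp v - Real.exp u) * ((Real.exp u)⁻¹ * (Real.exp v)⁻¹))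
          ≤ (1-α)*((Real.exp v - Real.exp u) * 1) := by
            apply mul_le_mul_of_nonneg_left _ hα'
            exact mul_le_mul_of_nonneg_left h2 h3
        _ = (1-α)*(Real.exp v - Real.exp u) := by ring
        _ ≤ α*(Real.exp v - Real.exp u) := mul_le_mul_of_nonneg_right hαα h3
    simp only [hSdef, Real.exp_neg]
    linarith
  -- strict monotonicity of H on [0,∞)
  have hHmono : StrictMonoOn H (Set.Ici (0:ℝ)) := by
    intro x hx y hy hxy
    simp only [Set.mem_Ici] at hx hy
    have h1 : (0:ℝ) < 1 + γ*x := by nlinarith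
    have h2 : 1 + γ*x < 1 + γ*y := by nlinarith
    simp only [hHdef]
    calc (1 + γ*x) * S x ≤ (1 + γ*x) * S y :=
          mul_le_mul_of_nonneg_left (hSmono x y hx hxy.le) h1.le
      _ < (1 + γ*y) * S y := mul_lt_mul_of_pos_right h2 (hSpos y)
  have heqH : H a₀ = 1 + η := by
    simp only [hHdef, hSdef]
    exact heq.symm
  -- derivative of f
  have hder : ∀ x : ℝ, HasDerivAt (fun x => (1+η)*x - (1/β)*(α * Real.exp (β * (x + (γ/2) * x^2))
      - (1-α)*Real.exp (-(β * (x + (γ/2) * x^2))))) ((1+η) - H x) x := by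
    intro x
    have h1 : HasDerivAt (fun x : ℝ => x + (γ/2) * x^2) (1 + γ*x) x := by
      have := (hasDerivAt_id x).add ((hasDerivAt_pow 2 x).const_mul (γ/2))
      refine HasDerivAt.congr_deriv this ?_
      simp; ring
    have h2 : HasDerivAt (fun x : ℝ => β * (x + (γ/2) * x^2)) (β * (1 + γ*x)) x :=
      h1.const_mul β
    have h3 := (h2.exp).const_mul α
    have h4 : HasDerivAt (fun x : ℝ => -(β * (x + (γ/2) * x^2))) (-(β * (1 + γ*x))) x := h2.neg
    have h5 := (h4.exp).const_mul (1-α)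
    have h6 := (h3.sub h5).const_mul (1/β)
    have h8 : HasDerivAt (fun x : ℝ => (1+η)*x) (1+η) x := by
      simpa using (hasDerivAt_id x).const_mul (1+η)
    have h9 := h8.sub h6
    refine HasDerivAt.congr_deriv h9 ?_
    simp only [hHdef, hSdef]
    field_simp
    ring
  have hcont : Continuous (fun x : ℝ => (1+η)*x - (1/β)*(α * Real.exp (β * (x + (γ/2) * x^2))
      - (1-α)*Real.exp (-(β * (x + (γ/2) * x^2))))) := by
    rw [continuous_iff_continuousAt]
    exact fun x => (hder x).continuousAt
  set F : ℝ → ℝ := fun x => (1+η)*x - (1/β)*(α * Real.exp (β * (x + (γ/2) * x^2))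
      - (1-α)*Real.exp (-(β * (x + (γ/2) * x^2)))) with hFdef
  have hderiv : ∀ x, deriv F x = (1+η) - H x := fun x => (hder x).deriv
  have hmonoF : StrictMonoOn F (Set.Icc 0 a₀) := by
    apply strictMonoOn_of_deriv_pos (convex_Icc 0 a₀) hcont.continuousOn
    intro x hx
    rw [interior_Icc] at hx
    rw [hderiv]
    have : H x < H a₀ := hHmono (Set.mem_Ici.2 hx.1.le) (Set.mem_Ici.2 ha₀.le) hx.2
    linarith [heqH]
  have hantiF : StrictAntiOn F (Set.Ici a₀) := by
    apply strictAntiOn_of_deriv_neg (convex_Ici a₀) hcont.continuousOn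
    intro x hx
    rw [interior_Ici] at hx
    rw [hderiv]
    have : H a₀ < H x := hHmono (Set.mem_Ici.2 ha₀.le) (Set.mem_Ici.2 (ha₀.le.trans hx.le)) hx
    linarith [heqH]
  -- main statement
  intro z hz
  set τ := r * (T - t) with hτdef
  have hτ : 0 ≤ τ := mul_nonneg hr (by linarith)
  set E := Real.exp τ with hEdef
  have hE : 0 < E := Real.exp_pos τ
  set m := a₀ * Real.exp (-τ) with hmdef
  have hmE : m * E = a₀ := by
    rw [hmdef, hEdef, mul_assoc, ← Real.exp_add, neg_add_cancel, Real.exp_zero, mul_one]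
  have hm : 0 < m := mul_pos ha₀ (Real.exp_pos _)
  have hminmem : min m z ∈ Set.Icc 0 z := ⟨le_min hm.le hz, min_le_right _ _⟩
  have hFle : ∀ w : ℝ, 0 ≤ w → F w ≤ F a₀ := by
    intro w hw
    rcases le_total w a₀ with h | h
    · exact hmonoF.monotoneOn ⟨hw, h⟩ ⟨ha₀.le, le_refl _⟩ h
    · exact hantiF.antitoneOn (Set.self_mem_Ici) (Set.mem_Ici.2 h) h
  have hmax : IsMaxOn (fun a => F (a * E)) (Set.Icc 0 z) (min m z) := by
    rw [isMaxOn_iff]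
    intro a ha
    obtain ⟨ha0, haz⟩ := ha
    show F (a * E) ≤ F (min m z * E)
    rcases le_total z m with hzm | hmz
    · rw [min_eq_right hzm]
      have hzE : z * E ≤ a₀ := by
        calc z * E ≤ m * E := mul_le_mul_of_nonneg_right hzm hE.le
          _ = a₀ := hmE
      have haE : a * E ≤ z * E := mul_le_mul_of_nonneg_right haz hE.le
      exact hmonoF.monotoneOn ⟨mul_nonneg ha0 hE.le, haE.trans hzE⟩
        ⟨mul_nonneg hz hE.le, hzE⟩ haE
    · rw [min_eq_left hmz, hmE]
      exact hFle (a * E) (mul_nonneg ha0 hE.le)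
  constructor
  · exact hmax
  · intro b hb hbmax
    have h1 : F (b * E) ≤ F (min m z * E) := isMaxOn_iff.mp hmax b hb
    have h2 : F (min m z * E) ≤ F (b * E) := isMaxOn_iff.mp hbmax (min m z) hminmem
    have heqv : F (b * E) = F (min m z * E) := le_antisymm h1 h2
    obtain ⟨hb0, hbz⟩ := hb
    rcases le_total z m with hzm | hmz
    · rw [min_eq_right hzm] at heqv ⊢
      rcases eq_or_lt_of_le hbz with h | h
      · exact h
      · exfalso
        have hzE : z * E ≤ a₀ := by
          calc z * E ≤ m * E := mul_le_mul_of_nonneg_right hzm hE.le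
            _ = a₀ := hmE
        have : F (b * E) < F (z * E) :=
          hmonoF ⟨mul_nonneg hb0 hE.le, (mul_le_mul_of_nonneg_right h.le hE.le).trans hzE⟩
            ⟨mul_nonneg hz hE.le, hzE⟩ (mul_lt_mul_of_pos_right h hE)
        linarith [heqv]
    · rw [min_eq_left hmz] at heqv ⊢
      rw [hmE] at heqv
      rcases lt_trichotomy (b * E) a₀ with h | h | h
      · exfalso
        have : F (b * E) < F a₀ :=
          hmonoF ⟨mul_nonneg hb0 hE.le, h.le⟩ ⟨ha₀.le, le_refl _⟩ h
        linarith
      · have : b * E = m * E := by rw [h, hmE]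
        exact mul_right_cancel₀ hE.ne' this
      · exfalso
        have : F (b * E) < F a₀ :=
          hantiF (Set.mem_Ici.2 (le_refl _)) (Set.mem_Ici.2 h.le) h
        linarith
end
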